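/- For a Latin-square-like chute: if f : Fin 3 × Fin 9 → Fin 9 is injective on all three boxes and on rows 0 and 2, then for every n ∈ Fin 9 the number of cells of row 1 where f takes value n is exactly 1. -/
import Mathlib


def chuteRow (i : Fin 3) : Set (Fin 3 × Fin 9) := {p | p.1 = i}
def chuteBox (k : Fin 3) : Set (Fin 3 × Fin 9) := {p | (p.2 : ℕ) / 3 = (k : ℕ)}

lemma key_count (f : Fin 3 × Fin 9 → Fin 9) (s : Finset (Fin 3 × Fin 9))
    (hcard : s.card = 9) (hinj : Set.InjOn f s) (n : Fin 9) :
    (s.filter (fun p => f p = n)).card = 1 := by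
  have himg : (s.image f).card = 9 := by
    rw [Finset.card_image_of_injOn hinj, hcard]
  have himg2 : s.image f = Finset.univ := Finset.eq_univ_of_card _ (by simp [himg])
  have hn : n ∈ s.image f := himg2 ▸ Finset.mem_univ n
  obtain ⟨p, hp, hfp⟩ := Finset.mem_image.mp hn
  rw [Finset.card_eq_one]
  refine ⟨p, ?_⟩
  ext q
  simp only [Finset.mem_filter, Finset.mem_singleton]
  constructor
  · rintro ⟨hq, hfq⟩
    exact hinj hq hp (by rw [hfq, hfp])
  · rintro rfl; exact ⟨hp, hfp⟩

theorem middle_row_count (f : Fin 3 × Fin 9 → Fin 9)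
    (hboxes : ∀ k : Fin 3, Set.InjOn f (chuteBox k))
    (h0 : Set.InjOn f (chuteRow 0)) (h2 : Set.InjOn f (chuteRow 2)) :
    ∀ n : Fin 9,
      (Finset.univ.filter (fun j : Fin 9 => f (1, j) = n)).card = 1 := by
  intro n
  classical
  -- box fibers
  have hbox : ∀ k : Fin 3,
      ((Finset.univ.filter (fun p : Fin 3 × Fin 9 => (p.2 : ℕ) / 3 = (k : ℕ))).filter
        (fun p => f p = n)).card = 1 := by
    intro k
    apply key_count f _ ?_ ?_ n
    · fin_cases k <;> decide
    · intro a ha b hb hab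
      refine hboxes k ?_ ?_ hab
      · simpa [chuteBox] using ha
      · simpa [chuteBox] using hb
  -- row fibers of size 9 as finsets
  have hrow : ∀ i : Fin 3, Set.InjOn f (chuteRow i) →
      ((Finset.univ.filter (fun p : Fin 3 × Fin 9 => p.1 = i)).filter
        (fun p => f p = n)).card = 1 := by
    intro i hi
    apply key_count f _ ?_ ?_ n
    · fin_cases i <;> decide
    · intro a ha b hb hab
      refine hi ?_ ?_ hab
      · simpa [chuteRow] using ha
      · simpa [chuteRow] using hb
  set S := Finset.univ.filter (fun p : Fin 3 × Fin 9 => f p = n) with hS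
  -- total count via boxes
  have hg : ∀ p : Fin 3 × Fin 9, (p.2 : ℕ) / 3 < 3 := by
    intro p; have := p.2.isLt; omega
  have hboxsum : S.card = ∑ k : Fin 3,
      (S.filter (fun p => (⟨(p.2 : ℕ) / 3, by omega⟩ : Fin 3) = k)).card :=
    Finset.card_eq_sum_card_fiberwise (fun p _ => Finset.mem_univ _)
  have hboxfib : ∀ k : Fin 3,
      (S.filter (fun p => (⟨(p.2 : ℕ) / 3, by omega⟩ : Fin 3) = k)).card = 1 := by
    intro k
    have hpred : S.filter (fun p => (⟨(p.2 : ℕ) / 3, by omega⟩ : Fin 3) = k)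
        = S.filter (fun p => (p.2 : ℕ) / 3 = (k : ℕ)) := by
      apply Finset.filter_congr
      intro p _
      simp [Fin.ext_iff]
    rw [hpred, hS, Finset.filter_comm]
    exact hbox k
  have htotal : S.card = 3 := by
    rw [hboxsum]
    simp [hboxfib]
  -- total count via rows
  have hrowsum : S.card = ∑ i : Fin 3, (S.filter (fun p => p.1 = i)).card :=
    Finset.card_eq_sum_card_fiberwise (fun p _ => Finset.mem_univ _)
  have hrowfib : ∀ i : Fin 3, (S.filter (fun p => p.1 = i)).card
      = ((Finset.univ.filter (fun p : Fin 3 × Fin 9 => p.1 = i)).filter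
          (fun p => f p = n)).card := by
    intro i
    rw [hS, Finset.filter_comm]
  have h1 : (S.filter (fun p => p.1 = (1 : Fin 3))).card = 1 := by
    have := hrowsum
    rw [htotal, Fin.sum_univ_three, hrowfib 0, hrowfib 2, hrow 0 h0, hrow 2 h2] at this
    omega
  -- final bijection
  rw [← h1]
  apply Finset.card_bij (fun j _ => ((1 : Fin 3), j))
  · intro j hj
    simp only [hS, Finset.mem_filter, Finset.mem_univ, true_and] at hj ⊢
    exact ⟨hj, trivial⟩
  · intro a _ b _ h
    exact (Prod.mk.injEq _ _ _ _ ▸ h).2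
  · intro p hp
    simp only [Finset.mem_filter, Finset.mem_univ, true_and, hS] at hp
    refine ⟨p.2, ?_, ?_⟩
    · simp only [Finset.mem_filter, Finset.mem_univ, true_and]
      rw [show ((1 : Fin 3), p.2) = p from (Prod.ext hp.2.symm rfl)]
      exact hp.1
    · exact (Prod.ext hp.2.symm rfl)
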